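/- arXiv:2211.11497 — 8 statements merged into one kernel-verified Lean document; each statement's English description precedes it below -/
import Mathlib

section
/- Let F be the set of ordered pairs of reduced fractions ((p,q),(k,m)) with integers 0 ≤ p ≤ q, 0 ≤ k ≤ m, q ≥ 1, m ≥ 1, gcd(p,q) = 1, gcd(k,m) = 1, and |p·m − q·k| = 1. For a real number r, the family ((q·m)^(−r)) indexed by F is summable if and only if r > 1. Equivalently, since |p/q − k/m| = 1/(qm) for such pairs, the sum of the r-th powers of the lengths of the Farey intervals in [0,1] converges if and only if r > 1. -/
/-!
A Farey pair `((p,q),(k,m))` is determined by its denominators `q, m` and the sign of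
`pm - qk`: two solutions `(p,k)`, `(p',k')` of `pm - qk = ±1` in the box `[0,q] × [0,m]`
satisfy `q ∣ p - p'` since `q, m` are coprime, and the only nontrivial option `{p,p'} = {0,q}`
forces `pm - qk = 0`. Hence the family is dominated by twice `∑ (qm)^(-r) = 2 (∑ q^(-r))²`,
which converges for `r > 1`. Conversely the pairs `((0,1),(1,m))` alone contribute the
`p`-series `∑ m^(-r)`, which diverges for `r ≤ 1`.
-/

/-- The set of ordered pairs of reduced fractions `((p,q),(k,m))` with
`0 ≤ p ≤ q`, `0 ≤ k ≤ m`, `q ≥ 1`, `m ≥ 1`, `gcd(p,q) = gcd(k,m) = 1` and `|p·m − q·k| = 1`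
(Farey neighbors in `[0,1]`). -/
def fareyPairs : Set ((ℤ × ℤ) × (ℤ × ℤ)) :=
  {x | 0 ≤ x.1.1 ∧ x.1.1 ≤ x.1.2 ∧ 0 ≤ x.2.1 ∧ x.2.1 ≤ x.2.2 ∧
    1 ≤ x.1.2 ∧ 1 ≤ x.2.2 ∧ Int.gcd x.1.1 x.1.2 = 1 ∧ Int.gcd x.2.1 x.2.2 = 1 ∧
    |x.1.1 * x.2.2 - x.1.2 * x.2.1| = 1}

theorem Int.isCoprime_of_abs_mul_sub_mul_eq_one {p q k m : ℤ} (h : |p * m - q * k| = 1) :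
    IsCoprime q m := by
  rcases (abs_eq zero_le_one).mp h with h | h
  · exact ⟨-k, p, by linear_combination h⟩
  · exact ⟨k, -p, by linear_combination -h⟩

theorem Int.eq_of_mul_sub_mul_eq_of_mem_Icc {p q k m p' k' : ℤ} (hq : 0 < q)
    (hqm : IsCoprime q m) (hp : p ∈ Set.Icc 0 q) (hp' : p' ∈ Set.Icc 0 q)
    (hk : k ∈ Set.Icc 0 m) (hk' : k' ∈ Set.Icc 0 m)
    (h : p * m - q * k = p' * m - q * k') (hne : p * m - q * k ≠ 0) : p = p' ∧ k = k' := by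
  obtain ⟨hp0, hpq⟩ := hp
  obtain ⟨hp0', hpq'⟩ := hp'
  obtain ⟨hk0, hkm⟩ := hk
  obtain ⟨hk0', hkm'⟩ := hk'
  obtain ⟨t, ht⟩ : q ∣ p - p' := hqm.dvd_of_dvd_mul_right ⟨k - k', by linear_combination h⟩
  have hkt : k - k' = t * m :=
    mul_left_cancel₀ hq.ne' (by linear_combination -h + m * ht)
  have ht_le : t ≤ 1 := by by_contra; nlinarith
  have ht_ge : -1 ≤ t := by by_contra; nlinarith
  interval_cases t
  · obtain ⟨rfl, rfl, rfl, rfl⟩ : p = 0 ∧ p' = q ∧ k = 0 ∧ k' = m := by omega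
    simp at h hne
  · omega
  · obtain ⟨rfl, rfl, rfl, rfl⟩ : p = q ∧ p' = 0 ∧ k = m ∧ k' = 0 := by omega
    simp at hne

namespace fareyPairs

def code (x : fareyPairs) : Bool × ℕ × ℕ :=
  (decide (0 < x.val.1.1 * x.val.2.2 - x.val.1.2 * x.val.2.1),
    x.val.1.2.toNat, x.val.2.2.toNat)

theorem code_injective : Function.Injective code := by
  rintro ⟨⟨⟨p, q⟩, ⟨k, m⟩⟩, hx⟩ ⟨⟨⟨p', q'⟩, ⟨k', m'⟩⟩, hx'⟩ h
  simp only [code, Prod.mk.injEq, decide_eq_decide] at h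
  obtain ⟨hsign, hq, hm⟩ := h
  rw [Subtype.mk.injEq]
  obtain ⟨hp0, hpq, hk0, hkm, hq1, hm1, -, -, hdet⟩ := hx
  obtain ⟨hp0', hpq', hk0', hkm', hq1', hm1', -, -, hdet'⟩ := hx'
  dsimp only at *
  obtain rfl : q = q' := by omega
  obtain rfl : m = m' := by omega
  have hdet_eq : p * m - q * k = p' * m - q * k' := by
    rcases (abs_eq zero_le_one).mp hdet with h | h <;>
      rcases (abs_eq zero_le_one).mp hdet' with h' | h' <;> simp_all
  obtain ⟨rfl, rfl⟩ := Int.eq_of_mul_sub_mul_eq_of_mem_Icc (by omega)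
    (Int.isCoprime_of_abs_mul_sub_mul_eq_one hdet) ⟨hp0, hpq⟩ ⟨hp0', hpq'⟩ ⟨hk0, hkm⟩
    ⟨hk0', hkm'⟩ hdet_eq (by rintro h; simp [h] at hdet)
  rfl

theorem summable_of_one_lt {r : ℝ} (hr : 1 < r) :
    Summable (fun x : fareyPairs => ((x.val.1.2 * x.val.2.2 : ℤ) : ℝ) ^ (-r)) := by
  have hpow : Summable (fun n : ℕ => (n : ℝ) ^ (-r)) := Real.summable_nat_rpow.mpr (by linarith)
  have hpow_nonneg : ∀ n : ℕ, 0 ≤ (n : ℝ) ^ (-r) := fun n => by positivity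
  have hcodes : Summable (fun c : Bool × ℕ × ℕ => (c.2.1 : ℝ) ^ (-r) * (c.2.2 : ℝ) ^ (-r)) := by
    simpa using (Summable.of_finite (f := fun _ : Bool => (1 : ℝ))).mul_of_nonneg
      (hpow.mul_of_nonneg hpow hpow_nonneg hpow_nonneg) (fun _ => zero_le_one)
      (fun c => mul_nonneg (hpow_nonneg c.1) (hpow_nonneg c.2))
  refine (hcodes.comp_injective code_injective).congr fun x => ?_
  obtain ⟨⟨⟨p, q⟩, ⟨k, m⟩⟩, -, -, -, -, hq1, hm1, -⟩ := x
  dsimp only at hq1 hm1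
  have hq : ((q.toNat : ℕ) : ℝ) = q := by exact_mod_cast Int.toNat_of_nonneg (by omega)
  have hm : ((m.toNat : ℕ) : ℝ) = m := by exact_mod_cast Int.toNat_of_nonneg (by omega)
  simp only [Function.comp_apply, code, hq, hm, Int.cast_mul]
  rw [Real.mul_rpow (by exact_mod_cast (by omega : (0 : ℤ) ≤ q))
    (by exact_mod_cast (by omega : (0 : ℤ) ≤ m))]

theorem zero_div_one_one_div_succ_mem (n : ℕ) :
    (((0 : ℤ), (1 : ℤ)), ((1 : ℤ), (n + 1 : ℤ))) ∈ fareyPairs := by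
  refine ⟨le_rfl, zero_le_one, zero_le_one, ?_, le_rfl, ?_, by simp, by simp, by simp⟩ <;>
    dsimp only <;> omega

theorem one_lt_of_summable {r : ℝ}
    (h : Summable (fun x : fareyPairs => ((x.val.1.2 * x.val.2.2 : ℤ) : ℝ) ^ (-r))) : 1 < r := by
  have hinj :
      Function.Injective (fun n : ℕ => (⟨_, zero_div_one_one_div_succ_mem n⟩ : fareyPairs)) := by
    intro a b hab
    simpa using congrArg (fun x : fareyPairs => x.val.2.2) hab
  have hshift : Summable (fun n : ℕ => ((n + 1 : ℕ) : ℝ) ^ (-r)) :=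
    (h.comp_injective hinj).congr fun n => by simp
  have := Real.summable_nat_rpow.mp ((summable_nat_add_iff 1).mp hshift)
  linarith

end fareyPairs

/-- **Summability of Farey lengths.**
The family `(q·m)^(−r)` indexed by pairs of Farey neighbors in `[0,1]` is summable
if and only if `r > 1`. -/
theorem farey_lengths_summable_iff (r : ℝ) :
    Summable (fun x : fareyPairs => ((x.val.1.2 * x.val.2.2 : ℤ) : ℝ) ^ (-r)) ↔ 1 < r :=
  ⟨fareyPairs.one_lt_of_summable, fareyPairs.summable_of_one_lt⟩
end

section
/- Let a < b be real numbers, let φ : ℝ → ℝ be continuous on [a,b] and differentiable on [a,b] with φ'(t) > 0 for all t ∈ [a,b], and suppose there exist constants C > 0 and α ∈ (0,1] such that |log φ'(s) − log φ'(t)| ≤ C·|s − t|^α for all s, t ∈ [a,b]. Then |(1/2)·(log φ'(a) + log φ'(b)) − log((φ(b) − φ(a))/(b − a))| ≤ C·(b − a)^α. -/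
/-! By the mean value theorem the slope `(φ b - φ a)/(b - a)` equals `φ' c` for some
`c ∈ (a, b)`, so the shear is the average of `log φ' a - log φ' c` and `log φ' b - log φ' c`,
each of which the Hölder bound controls by `C (b - a)^α`. -/

open Set

theorem rpow_abs_sub_le_rpow_of_mem_Icc {a b s t α : ℝ} (hα : 0 ≤ α) (hs : s ∈ Icc a b)
    (ht : t ∈ Icc a b) : |s - t| ^ α ≤ (b - a) ^ α :=
  Real.rpow_le_rpow (abs_nonneg _)
    (abs_sub_le_iff.2 ⟨by linarith [hs.2, ht.1], by linarith [hs.1, ht.2]⟩) hα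

theorem abs_half_add_sub_le {u v w K : ℝ} (hu : |u - w| ≤ K) (hv : |v - w| ≤ K) :
    |(1 / 2) * (u + v) - w| ≤ K := by
  rw [abs_le] at *
  constructor <;> linarith [hu.1, hu.2, hv.1, hv.2]

theorem diamond_shear_holder_bound_general (a b : ℝ) (hab : a < b) (φ φ' : ℝ → ℝ) (C α : ℝ)
    (hC : 0 < C) (hα : α ∈ Set.Ioc (0 : ℝ) 1)
    (hcont : ContinuousOn φ (Set.Icc a b))
    (hderiv : ∀ t ∈ Set.Icc a b, HasDerivWithinAt φ (φ' t) (Set.Icc a b) t)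
    (hHolder : ∀ s ∈ Set.Icc a b, ∀ t ∈ Set.Icc a b,
      |Real.log (φ' s) - Real.log (φ' t)| ≤ C * |s - t| ^ α) :
    |(1 / 2) * (Real.log (φ' a) + Real.log (φ' b)) - Real.log ((φ b - φ a) / (b - a))|
      ≤ C * (b - a) ^ α := by
  obtain ⟨c, hc, hslope⟩ := exists_hasDerivAt_eq_slope φ φ' hab hcont fun x hx =>
    (hderiv x (Ioo_subset_Icc_self hx)).hasDerivAt (Icc_mem_nhds hx.1 hx.2)
  have hcI : c ∈ Icc a b := Ioo_subset_Icc_self hc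
  have hbound : ∀ s ∈ Icc a b, |Real.log (φ' s) - Real.log (φ' c)| ≤ C * (b - a) ^ α :=
    fun s hs => (hHolder s hs c hcI).trans
      (mul_le_mul_of_nonneg_left (rpow_abs_sub_le_rpow_of_mem_Icc hα.1.le hs hcI) hC.le)
  rw [← hslope]
  exact abs_half_add_sub_le (hbound a (left_mem_Icc.2 hab.le)) (hbound b (right_mem_Icc.2 hab.le))

/-- **Hölder estimate for the diamond shear.**
If `φ` is continuous on `[a,b]`, differentiable on `[a,b]` with positive derivative `φ'`,
and `log φ'` is `α`-Hölder on `[a,b]` with constant `C`, then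
`|(1/2)(log φ'(a) + log φ'(b)) − log((φ(b) − φ(a))/(b − a))| ≤ C (b − a)^α`. -/
theorem diamond_shear_holder_bound (a b : ℝ) (hab : a < b) (φ φ' : ℝ → ℝ) (C α : ℝ)
    (hC : 0 < C) (hα : α ∈ Set.Ioc (0 : ℝ) 1)
    (hcont : ContinuousOn φ (Set.Icc a b))
    (hderiv : ∀ t ∈ Set.Icc a b, HasDerivWithinAt φ (φ' t) (Set.Icc a b) t)
    (hpos : ∀ t ∈ Set.Icc a b, 0 < φ' t)
    (hHolder : ∀ s ∈ Set.Icc a b, ∀ t ∈ Set.Icc a b,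
      |Real.log (φ' s) - Real.log (φ' t)| ≤ C * |s - t| ^ α) :
    |(1 / 2) * (Real.log (φ' a) + Real.log (φ' b)) - Real.log ((φ b - φ a) / (b - a))|
      ≤ C * (b - a) ^ α :=
  diamond_shear_holder_bound_general a b hab φ φ' C α hC hα hcont hderiv hHolder
end

section
/- For any a, b ∈ ℂ with |a| = |b| = 1, the integral over the open unit disk 𝔻 = {z ∈ ℂ : |z| < 1} with respect to Lebesgue area measure satisfies (1/(2π)) · ∫_𝔻 (a/(1 − a·conj(z))) · (conj(b)/(1 − conj(b)·z)) · (1 − |z|²)² dA(z) = ∑_{p=0}^∞ (a·conj(b))^{p+1} / ((p+1)(p+2)(p+3)). -/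
/-!
Expanding both Cauchy-type factors in geometric series writes the integrand as
`∑_{m,n} (a z̄)^m (b̄ z)^n · a b̄ (1 - |z|²)²`. The absolute series sums to `(1 + |z|)²`, which is
bounded on the disk, so dominated convergence lets us integrate termwise. In polar coordinates
the monomials `z̄^m z^n` are orthogonal against radial weights, and the diagonal terms reduce to
`2π ∫₀¹ r^(2m+1) (1 - r²)² dr = 2π / ((m+1)(m+2)(m+3))`.
-/

open MeasureTheory Metric Set Complex
open scoped Real ComplexConjugate

theorem integral_ball_zero_eq_integral_polarCoord {E : Type*} [NormedAddCommGroup E]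
    [NormedSpace ℝ E] (R : ℝ) (g : ℂ → E) :
    ∫ z in ball (0 : ℂ) R, g z
      = ∫ p in Ioo 0 R ×ˢ Ioo (-π) π, p.1 • g (Complex.polarCoord.symm p) := by
  rw [← integral_indicator measurableSet_ball, ← Complex.integral_comp_polarCoord_symm,
    polarCoord_target]
  have h_indicator : ∀ p ∈ Ioi (0 : ℝ) ×ˢ Ioo (-π) π,
      p.1 • (ball (0 : ℂ) R).indicator g (Complex.polarCoord.symm p)
        = (Ioo 0 R ×ˢ Ioo (-π) π).indicator
            (fun q ↦ q.1 • g (Complex.polarCoord.symm q)) p := by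
    rintro ⟨r, θ⟩ ⟨hr, hθ⟩
    have hmem : Complex.polarCoord.symm (r, θ) ∈ ball (0 : ℂ) R ↔ r < R := by
      rw [mem_ball_zero_iff, Complex.norm_polarCoord_symm, abs_of_pos hr]
    by_cases hrR : r < R
    · have h_mem : (r, θ) ∈ Ioo 0 R ×ˢ Ioo (-π) π := ⟨⟨hr, hrR⟩, hθ⟩
      rw [indicator_of_mem (hmem.2 hrR), indicator_of_mem h_mem]
    · rw [indicator_of_notMem (mt hmem.1 hrR), indicator_of_notMem (fun h ↦ hrR h.1.2),
        smul_zero]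
  rw [setIntegral_congr_fun (measurableSet_Ioi.prod measurableSet_Ioo) h_indicator,
    setIntegral_indicator (measurableSet_Ioo.prod measurableSet_Ioo),
    inter_eq_self_of_subset_right (prod_mono_left Ioo_subset_Ioi_self)]

theorem integral_exp_int_mul_mul_I (k : ℤ) :
    ∫ θ in (-π)..π, exp (k * θ * I) = if k = 0 then 2 * (π : ℂ) else 0 := by
  split_ifs with hk
  · simp [hk, two_mul]
  have hc : (k : ℂ) * I ≠ 0 := mul_ne_zero (by exact_mod_cast hk) Complex.I_ne_zero
  have h_exp : ∀ θ : ℝ, exp (k * θ * I) = exp (k * I * θ) :=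
    fun θ ↦ by ring_nf
  simp_rw [h_exp]
  rw [integral_exp_mul_complex hc]
  have h_period : ∀ θ : ℝ, exp (k * I * θ) = exp (θ * I) ^ k :=
    fun θ ↦ by rw [← Complex.exp_int_mul]; ring_nf
  rw [h_period, h_period]
  push_cast
  rw [Complex.exp_pi_mul_I, neg_mul, Complex.exp_neg, Complex.exp_pi_mul_I]
  norm_num

theorem conj_pow_mul_pow_polarCoord_symm (m n : ℕ) (r θ : ℝ) :
    conj (Complex.polarCoord.symm (r, θ)) ^ m * Complex.polarCoord.symm (r, θ) ^ n
      = r ^ (m + n) * exp (((n - m : ℤ) : ℂ) * θ * I) := by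
  set e := exp (θ * I)
  have h_polar : Complex.polarCoord.symm (r, θ) = r * e := by
    simp [e, Complex.exp_mul_I]
  have h_conj : conj e = e⁻¹ := by
    rw [← Complex.exp_conj, map_mul, Complex.conj_ofReal, Complex.conj_I, mul_neg,
      Complex.exp_neg]
  have h_exp : exp (((n - m : ℤ) : ℂ) * θ * I) = e ^ n / e ^ m := by
    rw [mul_assoc, Complex.exp_int_mul, zpow_sub₀ (Complex.exp_ne_zero _), zpow_natCast,
      zpow_natCast]
  rw [h_polar, h_exp, map_mul, Complex.conj_ofReal, h_conj]
  field_simp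
  ring

theorem integral_ball_conj_pow_mul_pow_mul_radial (m n : ℕ) (f : ℝ → ℝ) :
    ∫ z in ball (0 : ℂ) 1, conj z ^ m * z ^ n * (f ‖z‖ : ℂ)
      = if m = n then 2 * π * ((∫ r in (0 : ℝ)..1, r ^ (2 * m + 1) * f r : ℝ) : ℂ) else 0 := by
  have h_polar : ∀ p ∈ Ioo (0 : ℝ) 1 ×ˢ Ioo (-π) π,
      p.1 • (conj (Complex.polarCoord.symm p) ^ m * Complex.polarCoord.symm p ^ n
          * (f ‖Complex.polarCoord.symm p‖ : ℂ))
        = ((p.1 ^ (m + n + 1) * f p.1 : ℝ) : ℂ)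
          * exp (((n - m : ℤ) : ℂ) * p.2 * I) := by
    rintro ⟨r, θ⟩ ⟨hr, -⟩
    rw [conj_pow_mul_pow_polarCoord_symm, Complex.norm_polarCoord_symm, abs_of_pos hr.1,
      Complex.real_smul]
    push_cast
    ring
  rw [integral_ball_zero_eq_integral_polarCoord,
    setIntegral_congr_fun (measurableSet_Ioo.prod measurableSet_Ioo) h_polar,
    Measure.volume_eq_prod, setIntegral_prod_mul (fun r : ℝ ↦ ((r ^ (m + n + 1) * f r : ℝ) : ℂ))
      (fun θ : ℝ ↦ exp (((n - m : ℤ) : ℂ) * θ * I)),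
    ← integral_Ioc_eq_integral_Ioo, ← integral_Ioc_eq_integral_Ioo,
    ← intervalIntegral.integral_of_le zero_le_one,
    ← intervalIntegral.integral_of_le (by linarith [Real.pi_pos]),
    integral_exp_int_mul_mul_I, intervalIntegral.integral_ofReal]
  rcases eq_or_ne m n with rfl | hmn
  · rw [sub_self, if_pos rfl, if_pos rfl, ← two_mul]
    ring
  · rw [if_neg (sub_ne_zero.2 (Nat.cast_injective.ne hmn.symm)), if_neg hmn, mul_zero]

open intervalIntegral in
theorem integral_pow_mul_one_sub_sq_sq (m : ℕ) :
    ∫ r in (0 : ℝ)..1, r ^ (2 * m + 1) * (1 - r ^ 2) ^ 2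
      = 1 / (((m : ℝ) + 1) * (m + 2) * (m + 3)) := by
  have h_expand : ∀ r : ℝ, r ^ (2 * m + 1) * (1 - r ^ 2) ^ 2
      = r ^ (2 * m + 1) - 2 * r ^ (2 * m + 3) + r ^ (2 * m + 5) := fun r ↦ by ring
  simp_rw [h_expand]
  rw [integral_add ((intervalIntegrable_pow _).sub ((intervalIntegrable_pow _).const_mul 2))
      (intervalIntegrable_pow _),
    integral_sub (intervalIntegrable_pow _) ((intervalIntegrable_pow _).const_mul 2),
    intervalIntegral.integral_const_mul]
  simp only [integral_pow]
  push_cast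
  field_simp
  ring

theorem hasSum_pow_mul_pow {K : Type*} [NormedField K] [CompleteSpace K] {x y : K}
    (hx : ‖x‖ < 1) (hy : ‖y‖ < 1) :
    HasSum (fun p : ℕ × ℕ ↦ x ^ p.1 * y ^ p.2) ((1 - x)⁻¹ * (1 - y)⁻¹) := by
  have h_norm : ∀ {ξ : K}, ‖ξ‖ < 1 → Summable fun n : ℕ ↦ ‖ξ ^ n‖ := fun hξ ↦ by
    simpa only [norm_pow] using summable_geometric_of_lt_one (norm_nonneg _) hξ
  exact (hasSum_geometric_of_norm_lt_one hx).mul (hasSum_geometric_of_norm_lt_one hy)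
    (summable_mul_of_summable_norm (h_norm hx) (h_norm hy))

theorem integral_ball_conj_pow_mul_pow_mul_one_sub_norm_sq_sq (m n : ℕ) :
    ∫ z in ball (0 : ℂ) 1, conj z ^ m * z ^ n * (((1 - ‖z‖ ^ 2) ^ 2 : ℝ) : ℂ)
      = if m = n then 2 * (π : ℂ) / ((m + 1) * (m + 2) * (m + 3)) else 0 := by
  rw [integral_ball_conj_pow_mul_pow_mul_radial m n (fun r ↦ (1 - r ^ 2) ^ 2),
    integral_pow_mul_one_sub_sq_sq]
  split_ifs
  · push_cast
    ring
  · rfl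

theorem HasSum.diag_of_off_diag_eq_zero {α M : Type*} [AddCommMonoid M] [TopologicalSpace M]
    {f : α × α → M} {s : M} (hf : HasSum f s) (h_off : ∀ m n, m ≠ n → f (m, n) = 0) :
    HasSum (fun m ↦ f (m, m)) s := by
  refine (Function.Injective.hasSum_iff (g := fun m ↦ (m, m))
    (fun m n h ↦ congrArg Prod.fst h) ?_).2 hf
  rintro ⟨m, n⟩ h_mem
  exact h_off m n fun hmn ↦ h_mem ⟨m, by rw [hmn]⟩

noncomputable def kernelTerm (a b : ℂ) (p : ℕ × ℕ) (z : ℂ) : ℂ :=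
  (a * conj z) ^ p.1 * (conj b * z) ^ p.2 * (a * conj b * (((1 - ‖z‖ ^ 2) ^ 2 : ℝ) : ℂ))

theorem integral_kernelTerm (a b : ℂ) (m n : ℕ) :
    ∫ z in ball (0 : ℂ) 1, kernelTerm a b (m, n) z
      = if m = n then (a * conj b) ^ (m + 1) * (2 * π / ((m + 1) * (m + 2) * (m + 3))) else 0 := by
  have h_factor : ∀ z : ℂ, kernelTerm a b (m, n) z
      = a ^ m * conj b ^ n * (a * conj b) * (conj z ^ m * z ^ n * (((1 - ‖z‖ ^ 2) ^ 2 : ℝ) : ℂ)) :=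
    fun z ↦ by rw [kernelTerm]; ring
  simp_rw [h_factor]
  rw [integral_const_mul, integral_ball_conj_pow_mul_pow_mul_one_sub_norm_sq_sq]
  split_ifs with hmn
  · subst hmn
    ring
  · rw [mul_zero]

theorem norm_kernelTerm {a b : ℂ} (ha : ‖a‖ = 1) (hb : ‖b‖ = 1) (p : ℕ × ℕ) (z : ℂ) :
    ‖kernelTerm a b p z‖ = ‖z‖ ^ p.1 * ‖z‖ ^ p.2 * (1 - ‖z‖ ^ 2) ^ 2 := by
  simp only [kernelTerm, norm_mul, norm_pow, Complex.norm_conj, ha, hb, Complex.norm_real,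
    Real.norm_eq_abs, sq_abs, one_mul, mul_one]

theorem hasSum_norm_kernelTerm {a b z : ℂ} (ha : ‖a‖ = 1) (hb : ‖b‖ = 1) (hz : ‖z‖ < 1) :
    HasSum (fun p ↦ ‖kernelTerm a b p z‖) ((1 + ‖z‖) ^ 2) := by
  have h_sum : (1 + ‖z‖) ^ 2 = (1 - ‖z‖)⁻¹ * (1 - ‖z‖)⁻¹ * (1 - ‖z‖ ^ 2) ^ 2 := by
    have : 1 - ‖z‖ ≠ 0 := by linarith
    field_simp
    ring
  have hz' : ‖‖z‖‖ < 1 := by rwa [norm_norm]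
  simp_rw [norm_kernelTerm ha hb, h_sum]
  exact (hasSum_pow_mul_pow hz' hz').mul_right _

theorem hasSum_kernelTerm {a b z : ℂ} (ha : ‖a‖ = 1) (hb : ‖b‖ = 1) (hz : ‖z‖ < 1) :
    HasSum (fun p ↦ kernelTerm a b p z)
      (a / (1 - a * conj z) * (conj b / (1 - conj b * z)) * (((1 - ‖z‖ ^ 2) ^ 2 : ℝ) : ℂ)) := by
  have h_eq : a / (1 - a * conj z) * (conj b / (1 - conj b * z)) * (((1 - ‖z‖ ^ 2) ^ 2 : ℝ) : ℂ)
      = (1 - a * conj z)⁻¹ * (1 - conj b * z)⁻¹ * (a * conj b * (((1 - ‖z‖ ^ 2) ^ 2 : ℝ) : ℂ)) := by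
    ring
  have hx : ‖a * conj z‖ < 1 := by rwa [norm_mul, Complex.norm_conj, ha, one_mul]
  have hy : ‖conj b * z‖ < 1 := by rwa [norm_mul, Complex.norm_conj, hb, one_mul]
  rw [h_eq]
  exact (hasSum_pow_mul_pow hx hy).mul_right _

theorem hasSum_integral_kernelTerm {a b : ℂ} (ha : ‖a‖ = 1) (hb : ‖b‖ = 1) :
    HasSum (fun p ↦ ∫ z in ball (0 : ℂ) 1, kernelTerm a b p z)
      (∫ z in ball (0 : ℂ) 1,
        a / (1 - a * conj z) * (conj b / (1 - conj b * z)) * (((1 - ‖z‖ ^ 2) ^ 2 : ℝ) : ℂ)) := by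
  have h_dominant : IntegrableOn (fun z : ℂ ↦ (1 + ‖z‖) ^ 2) (ball 0 1) :=
    ((by fun_prop : Continuous fun z : ℂ ↦ (1 + ‖z‖) ^ 2).continuousOn.integrableOn_compact
      (isCompact_closedBall 0 1)).mono_set ball_subset_closedBall
  have h_norm_sum : ∀ z ∈ ball (0 : ℂ) 1, HasSum (fun p ↦ ‖kernelTerm a b p z‖) ((1 + ‖z‖) ^ 2) :=
    fun z hz ↦ hasSum_norm_kernelTerm ha hb (mem_ball_zero_iff.1 hz)
  refine hasSum_integral_of_dominated_convergence (fun p z ↦ ‖kernelTerm a b p z‖)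
    (fun p ↦ by unfold kernelTerm; fun_prop) (fun p ↦ ae_of_all _ fun z ↦ le_rfl)
    (ae_restrict_of_forall_mem measurableSet_ball fun z hz ↦ (h_norm_sum z hz).summable)
    (h_dominant.congr_fun (fun z hz ↦ (h_norm_sum z hz).tsum_eq.symm) measurableSet_ball)
    (ae_restrict_of_forall_mem measurableSet_ball fun z hz ↦ ?_)
  exact hasSum_kernelTerm ha hb (mem_ball_zero_iff.1 hz)

/-- **The kernel integral `σ(a,b)` over the unit disk.**
For `a, b` on the unit circle,
`(1/(2π)) ∫_𝔻 (a/(1 − a·conj z)) (conj b/(1 − conj b·z)) (1 − |z|²)² dA(z)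
  = ∑_{p≥0} (a·conj b)^{p+1}/((p+1)(p+2)(p+3))`. -/
theorem sigma_kernel_integral (a b : ℂ) (ha : ‖a‖ = 1) (hb : ‖b‖ = 1) :
    (1 / (2 * (Real.pi : ℂ))) *
        ∫ z in Metric.ball (0 : ℂ) 1,
          (a / (1 - a * (starRingEnd ℂ) z)) * ((starRingEnd ℂ) b / (1 - (starRingEnd ℂ) b * z)) *
            (((1 - ‖z‖ ^ 2) ^ 2 : ℝ) : ℂ)
      = ∑' p : ℕ, (a * (starRingEnd ℂ) b) ^ (p + 1)
          / (((p : ℂ) + 1) * ((p : ℂ) + 2) * ((p : ℂ) + 3)) := by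
  have h_diag := (hasSum_integral_kernelTerm ha hb).diag_of_off_diag_eq_zero
    fun m n hmn ↦ by rw [integral_kernelTerm, if_neg hmn]
  simp only [integral_kernelTerm, if_pos] at h_diag
  rw [← (h_diag.mul_left (1 / (2 * (π : ℂ)))).tsum_eq]
  exact tsum_congr fun m ↦ by field_simp
end

section
/- The complex series ∑_{p=1}^∞ i^p / (p·(p+1)·(p+2)) converges and its sum equals (3 − π)/4 − i·(log 2 − 1)/2, where i is the imaginary unit. -/
/-!
On the open unit disk, partial fractions
`1/((p+1)(p+2)(p+3)) = 1/(2(p+1)) - 1/(p+2) + 1/(2(p+3))` split the series into three shifted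
copies of `∑ zᵖ/p = -log (1 - z)`, which gives the closed form
`σ(z) = 3/4 - 1/(2z) - (1 - z)² log (1 - z) / (2z²)`. The series converges uniformly on the closed
disk (its terms are bounded by `1/(p+1)²`), so its sum is continuous there; the closed form is
continuous at every boundary point `w ≠ 1`, so letting `r → 1⁻` along `r w` extends the formula to
`w`. At `w = i`, with `log (1 - i) = log 2 / 2 - iπ/4`, it evaluates to `(3 - π)/4 - i(log 2 - 1)/2`.
-/

open Complex Filter Topology Metric Finset

/-- The sum `σ(a, b)` of the paper as a function of `z = a * conj b`, valid for `z ≠ 0`. -/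
noncomputable def sigmaClosedForm (z : ℂ) : ℂ :=
  3 / 4 - 1 / (2 * z) - (1 - z) ^ 2 * log (1 - z) / (2 * z ^ 2)

theorem Complex.hasSum_pow_add_div_add {z : ℂ} (hz : ‖z‖ < 1) (k : ℕ) :
    HasSum (fun n : ℕ => z ^ (n + k) / ((n + k : ℕ) : ℂ))
      (-log (1 - z) - ∑ i ∈ range k, z ^ i / i) :=
  (hasSum_nat_add_iff' k).mpr (hasSum_taylorSeries_neg_log hz)

theorem pow_succ_div_eq_partial_fractions {z : ℂ} (hz : z ≠ 0) (n : ℕ) :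
    z ^ (n + 1) / (((n : ℂ) + 1) * ((n : ℂ) + 2) * ((n : ℂ) + 3)) =
      z ^ (n + 1) / ((n + 1 : ℕ) : ℂ) / 2 - z ^ (n + 2) / ((n + 2 : ℕ) : ℂ) / z
        + z ^ (n + 3) / ((n + 3 : ℕ) : ℂ) / (2 * z ^ 2) := by
  have h1 : (n : ℂ) + 1 ≠ 0 := by norm_cast
  have h2 : (n : ℂ) + 2 ≠ 0 := by norm_cast
  have h3 : (n : ℂ) + 3 ≠ 0 := by norm_cast
  rw [pow_add z n 2, pow_add z n 3, pow_succ]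
  push_cast
  field_simp
  ring

theorem hasSum_sigmaClosedForm_of_norm_lt_one {z : ℂ} (hz : ‖z‖ < 1) (hz0 : z ≠ 0) :
    HasSum (fun n : ℕ => z ^ (n + 1) / (((n : ℂ) + 1) * ((n : ℂ) + 2) * ((n : ℂ) + 3)))
      (sigmaClosedForm z) := by
  have h := (((hasSum_pow_add_div_add hz 1).div_const 2).sub
    ((hasSum_pow_add_div_add hz 2).div_const z)).add
    ((hasSum_pow_add_div_add hz 3).div_const (2 * z ^ 2))
  rw [funext (pow_succ_div_eq_partial_fractions hz0)]
  refine (?_ : _ = sigmaClosedForm z) ▸ h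
  simp only [sum_range_succ, sum_range_zero, sigmaClosedForm]
  push_cast
  field_simp
  ring

theorem norm_pow_succ_div_le {z : ℂ} (hz : ‖z‖ ≤ 1) (n : ℕ) :
    ‖z ^ (n + 1) / (((n : ℂ) + 1) * ((n : ℂ) + 2) * ((n : ℂ) + 3))‖ ≤ 1 / ((n : ℝ) + 1) ^ 2 := by
  have hden : ‖((n : ℂ) + 1) * ((n : ℂ) + 2) * ((n : ℂ) + 3)‖
      = ((n : ℝ) + 1) * ((n : ℝ) + 2) * ((n : ℝ) + 3) := by
    norm_cast
  rw [norm_div, norm_pow, hden]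
  gcongr
  · exact pow_le_one₀ (norm_nonneg z) hz
  · nlinarith

theorem summable_one_div_nat_add_one_sq : Summable fun n : ℕ => 1 / ((n : ℝ) + 1) ^ 2 := by
  simpa using (Real.summable_one_div_nat_add_rpow 1 2).mpr one_lt_two

theorem continuousOn_tsum_pow_succ_div :
    ContinuousOn
      (fun z : ℂ => ∑' n : ℕ, z ^ (n + 1) / (((n : ℂ) + 1) * ((n : ℂ) + 2) * ((n : ℂ) + 3)))
      (closedBall 0 1) :=
  continuousOn_tsum (fun _ => ((continuous_pow _).div_const _).continuousOn)
    summable_one_div_nat_add_one_sq fun n _ hz => norm_pow_succ_div_le (by simpa using hz) n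

theorem Complex.one_sub_mem_slitPlane {w : ℂ} (hw : ‖w‖ ≤ 1) (hw1 : w ≠ 1) :
    1 - w ∈ slitPlane := by
  rw [mem_slitPlane_iff, sub_re, sub_im, one_re, one_im]
  by_contra! h
  have hre : w.re = 1 := le_antisymm ((re_le_norm w).trans hw) (by linarith [h.1])
  have him : w.im = 0 := by linarith [h.2]
  exact hw1 (ext (by simp [hre]) (by simp [him]))

theorem continuousAt_sigmaClosedForm {w : ℂ} (hw0 : w ≠ 0) (hw : 1 - w ∈ slitPlane) :
    ContinuousAt sigmaClosedForm w := by
  have hlog : ContinuousAt (fun z : ℂ => log (1 - z)) w :=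
    (continuousAt_const.sub continuousAt_id).clog hw
  unfold sigmaClosedForm
  fun_prop (disch := simpa)

theorem hasSum_sigmaClosedForm {w : ℂ} (hw : ‖w‖ ≤ 1) (hw0 : w ≠ 0) (hw1 : w ≠ 1) :
    HasSum (fun n : ℕ => w ^ (n + 1) / (((n : ℂ) + 1) * ((n : ℂ) + 2) * ((n : ℂ) + 3)))
      (sigmaClosedForm w) := by
  have hsum : Summable fun n : ℕ =>
      w ^ (n + 1) / (((n : ℂ) + 1) * ((n : ℂ) + 2) * ((n : ℂ) + 3)) :=
    .of_norm_bounded summable_one_div_nat_add_one_sq (norm_pow_succ_div_le hw)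
  refine hsum.hasSum_iff.mpr ?_
  have hinside : ∀ᶠ r : ℝ in 𝓝[<] 1, ‖(r : ℂ) * w‖ < 1 ∧ (r : ℂ) * w ≠ 0 := by
    filter_upwards [Ioo_mem_nhdsLT zero_lt_one] with r ⟨hr0, hr1⟩
    refine ⟨?_, mul_ne_zero (ofReal_ne_zero.mpr hr0.ne') hw0⟩
    rw [norm_mul, norm_real, Real.norm_of_nonneg hr0.le]
    nlinarith [norm_nonneg w]
  have hradial : Tendsto (fun r : ℝ => (r : ℂ) * w) (𝓝[<] 1) (𝓝[closedBall 0 1] w) := by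
    refine tendsto_nhdsWithin_iff.mpr ⟨?_, hinside.mono fun r hr => by simpa using hr.1.le⟩
    have hcont : Tendsto (fun r : ℝ => (r : ℂ) * w) (𝓝 1) (𝓝 w) := by
      simpa using (continuous_ofReal.mul continuous_const).tendsto (1 : ℝ)
        (f := fun r : ℝ => (r : ℂ) * w)
    exact hcont.mono_left nhdsWithin_le_nhds
  refine tendsto_nhds_unique
    ((continuousOn_tsum_pow_succ_div w (by simpa using hw)).tendsto.comp hradial) ?_
  refine ((continuousAt_sigmaClosedForm hw0 (one_sub_mem_slitPlane hw hw1)).tendsto.comp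
    (tendsto_nhdsWithin_iff.mp hradial).1).congr' ?_
  filter_upwards [hinside] with r hr
  exact (hasSum_sigmaClosedForm_of_norm_lt_one hr.1 hr.2).tsum_eq.symm

theorem Complex.log_one_sub_I : log (1 - I) = Real.log 2 / 2 - Real.pi / 4 * I := by
  have hpolar : 1 - I = (Real.sqrt 2 : ℝ) * exp ((-(Real.pi / 4) : ℝ) * I) := by
    rw [exp_mul_I, ← ofReal_cos, ← ofReal_sin, Real.cos_neg, Real.sin_neg,
      Real.cos_pi_div_four, Real.sin_pi_div_four]
    have hsq : ((Real.sqrt 2 : ℝ) : ℂ) ^ 2 = 2 := by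
      rw [← ofReal_pow, Real.sq_sqrt zero_le_two, ofReal_ofNat]
    push_cast
    linear_combination -(1 - I) / 2 * hsq
  rw [hpolar, log_ofReal_mul (by positivity) (exp_ne_zero _), Real.log_sqrt zero_le_two, log_exp]
  · push_cast
    ring
  all_goals
    simp only [mul_im, ofReal_re, ofReal_im, I_re, I_im, mul_zero, mul_one]
    linarith [Real.pi_pos]

theorem sigmaClosedForm_I :
    sigmaClosedForm I = (((3 - Real.pi) / 4 : ℝ) : ℂ) - I * (((Real.log 2 - 1) / 2 : ℝ) : ℂ) := by
  rw [sigmaClosedForm, log_one_sub_I, one_div, mul_inv, inv_I, I_sq]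
  push_cast
  linear_combination ((Real.log 2 : ℂ) / 4 + Real.pi / 4 - Real.pi / 8 * I) * I_sq

/-- **Evaluation of `σ(i,1)`.**
The series `∑_{p=1}^∞ i^p/(p(p+1)(p+2))` converges with sum `(3 − π)/4 − i(log 2 − 1)/2`.
(Here the summation index is shifted so that `p = n + 1` runs over `1, 2, 3, …`.) -/
theorem i_power_series_eval :
    HasSum (fun n : ℕ => Complex.I ^ (n + 1) / (((n : ℂ) + 1) * ((n : ℂ) + 2) * ((n : ℂ) + 3)))
      ((((3 - Real.pi) / 4 : ℝ) : ℂ) - Complex.I * (((Real.log 2 - 1) / 2 : ℝ) : ℂ)) :=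
  sigmaClosedForm_I ▸ hasSum_sigmaClosedForm (by simp) I_ne_zero (by simp [Complex.ext_iff])
end

section
/- Let μ : ℍ → ℂ be a measurable function on the open upper half-plane ℍ = {ζ ∈ ℂ : Im ζ > 0} such that ∫_ℍ |μ(ζ)|²·(Im ζ)^{−2} dA(ζ) < ∞. Define F on the open lower half-plane ℍ* = {z ∈ ℂ : Im z < 0} by F(z) = ∫_ℍ μ(ζ)·(ζ − z)^{−4} dA(ζ). Then ∫_{ℍ*} |F(z)|²·(Im z)² dA(z) ≤ (π²/16) · ∫_ℍ |μ(ζ)|²·(Im ζ)^{−2} dA(ζ). -/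
/-!
The kernel `K(z, ζ) = |Im z| Im ζ / |ζ - z|⁴` on `ℍ* × ℍ` has all its row and column integrals
equal to `π / 4`: integrating first in `Re ζ` and then in `Im ζ` uses
`∫ dx / ((x - a)² + b²)² = π / (2b³)` and `∫₀^∞ y dy / (y + t)³ = 1 / (2t)`, and the reflection
`z ↦ -z` exchanges rows and columns. Since `|F(z)| |Im z| ≤ ∫_ℍ K(z, ζ) |μ(ζ)| / Im ζ dA(ζ)`,
Schur's test applied to `|μ| / Im ζ` gives the constant `(π / 4)² = π² / 16`.
-/

open MeasureTheory Real Filter Topology Set Function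
open scoped ENNReal

theorem sq_lintegral_mul_le {α : Type*} [MeasurableSpace α] {μ : Measure α}
    {k f : α → ℝ≥0∞} (hk : AEMeasurable k μ) (hf : AEMeasurable f μ) :
    (∫⁻ x, k x * f x ∂μ) ^ 2 ≤ (∫⁻ x, k x ∂μ) * ∫⁻ x, k x * f x ^ 2 ∂μ := by
  have hsqrt (a : ℝ≥0∞) : (a ^ (1 / 2 : ℝ)) ^ 2 = a := by
    rw [← ENNReal.rpow_natCast, ← ENNReal.rpow_mul]
    norm_num
  have hsplit (x : α) : k x * f x = k x ^ (1 / 2 : ℝ) * (k x * f x ^ 2) ^ (1 / 2 : ℝ) := by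
    rw [ENNReal.mul_rpow_of_nonneg _ _ (by norm_num), ← mul_assoc,
      ← ENNReal.rpow_add_of_nonneg _ _ (by norm_num) (by norm_num), ← ENNReal.rpow_natCast,
      ← ENNReal.rpow_mul]
    norm_num
  calc (∫⁻ x, k x * f x ∂μ) ^ 2
      = (∫⁻ x, k x ^ (1 / 2 : ℝ) * (k x * f x ^ 2) ^ (1 / 2 : ℝ) ∂μ) ^ 2 := by
        simp_rw [← hsplit]
    _ ≤ ((∫⁻ x, k x ∂μ) ^ (1 / 2 : ℝ) * (∫⁻ x, k x * f x ^ 2 ∂μ) ^ (1 / 2 : ℝ)) ^ 2 := by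
        gcongr
        exact ENNReal.lintegral_mul_norm_pow_le hk (hk.mul (hf.pow_const 2)) (by norm_num)
          (by norm_num) (by norm_num)
    _ = (∫⁻ x, k x ∂μ) * ∫⁻ x, k x * f x ^ 2 ∂μ := by
        rw [mul_pow, hsqrt, hsqrt]

theorem lintegral_sq_lintegral_mul_le_of_schur {α β : Type*} [MeasurableSpace α]
    [MeasurableSpace β] {μ : Measure α} {ν : Measure β} [SFinite μ] [SFinite ν]
    {K : α → β → ℝ≥0∞} (hK : Measurable (uncurry K)) {f : β → ℝ≥0∞} (hf : Measurable f)
    {A B : ℝ≥0∞} (hA : ∀ᵐ x ∂μ, ∫⁻ y, K x y ∂ν ≤ A) (hB : ∀ᵐ y ∂ν, ∫⁻ x, K x y ∂μ ≤ B) :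
    ∫⁻ x, (∫⁻ y, K x y * f y ∂ν) ^ 2 ∂μ ≤ A * B * ∫⁻ y, f y ^ 2 ∂ν := by
  have hKf : Measurable (uncurry fun x y => K x y * f y ^ 2) :=
    hK.mul ((hf.pow_const 2).comp measurable_snd)
  calc ∫⁻ x, (∫⁻ y, K x y * f y ∂ν) ^ 2 ∂μ
      ≤ ∫⁻ x, A * ∫⁻ y, K x y * f y ^ 2 ∂ν ∂μ := by
        refine lintegral_mono_ae (hA.mono fun x hx => ?_)
        exact (sq_lintegral_mul_le (hK.comp measurable_prodMk_left).aemeasurable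
          hf.aemeasurable).trans (mul_le_mul_left hx _)
    _ = A * ∫⁻ y, (∫⁻ x, K x y ∂μ) * f y ^ 2 ∂ν := by
        rw [lintegral_const_mul _ hKf.lintegral_prod_right,
          lintegral_lintegral_swap hKf.aemeasurable]
        congr 1
        exact lintegral_congr fun y => lintegral_mul_const _ (hK.comp measurable_prodMk_right)
    _ ≤ A * ∫⁻ y, B * f y ^ 2 ∂ν := by
        gcongr 1
        exact lintegral_mono_ae (hB.mono fun y hy => mul_le_mul_left hy _)
    _ = A * B * ∫⁻ y, f y ^ 2 ∂ν := by
        rw [lintegral_const_mul _ (hf.pow_const 2), mul_assoc]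

theorem tendsto_div_one_add_sq_cocompact :
    Tendsto (fun x : ℝ => x / (1 + x ^ 2)) (cocompact ℝ) (𝓝 0) := by
  refine squeeze_zero_norm' ?_ (tendsto_inv_atTop_zero.comp tendsto_norm_cocompact_atTop)
  filter_upwards [eventually_ne_of_tendsto_norm_atTop tendsto_norm_cocompact_atTop 0] with x hx
  have hx' : 0 < |x| := abs_pos.2 hx
  calc ‖x / (1 + x ^ 2)‖ = |x| / (1 + |x| ^ 2) := by
        rw [norm_div, Real.norm_eq_abs, Real.norm_of_nonneg (by positivity), sq_abs]
    _ ≤ |x| / |x| ^ 2 := by gcongr; linarith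
    _ = ‖x‖⁻¹ := by rw [Real.norm_eq_abs]; field_simp

theorem integrable_inv_one_add_sq_sq : Integrable fun x : ℝ => ((1 + x ^ 2) ^ 2)⁻¹ := by
  refine integrable_inv_one_add_sq.mono' (by fun_prop) (.of_forall fun x => ?_)
  rw [Real.norm_of_nonneg (by positivity)]
  exact inv_anti₀ (by positivity) (le_self_pow₀ (by nlinarith) two_ne_zero)

theorem integral_inv_one_add_sq_sq : ∫ x : ℝ, ((1 + x ^ 2) ^ 2)⁻¹ = π / 2 := by
  have hderiv (x : ℝ) :
      HasDerivAt (fun x => (x / (1 + x ^ 2) + arctan x) / 2) ((1 + x ^ 2) ^ 2)⁻¹ x := by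
    have h : (1 : ℝ) + x ^ 2 ≠ 0 := by positivity
    refine ((((hasDerivAt_id' x).div ((hasDerivAt_pow 2 x).const_add 1) h).add
      (hasDerivAt_arctan x)).div_const 2).congr_deriv ?_
    field_simp
    ring
  have hlim (l : Filter ℝ) (hl : l ≤ cocompact ℝ) (a : ℝ) (ha : Tendsto arctan l (𝓝 a)) :
      Tendsto (fun x => (x / (1 + x ^ 2) + arctan x) / 2) l (𝓝 (a / 2)) := by
    simpa using ((tendsto_div_one_add_sq_cocompact.mono_left hl).add ha).div_const 2
  rw [integral_of_hasDerivAt_of_tendsto hderiv integrable_inv_one_add_sq_sq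
    (hlim _ atBot_le_cocompact _ (tendsto_nhds_of_tendsto_nhdsWithin tendsto_arctan_atBot))
    (hlim _ atTop_le_cocompact _ (tendsto_nhds_of_tendsto_nhdsWithin tendsto_arctan_atTop))]
  ring

theorem lintegral_inv_sub_sq_add_sq_sq (a : ℝ) {b : ℝ} (hb : 0 < b) :
    ∫⁻ x : ℝ, ENNReal.ofReal ((((x - a) ^ 2 + b ^ 2) ^ 2)⁻¹)
      = ENNReal.ofReal (π / (2 * b ^ 3)) := by
  set g : ℝ → ℝ := fun u => ((1 + u ^ 2) ^ 2)⁻¹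
  have hrescale : (fun x : ℝ => (((x - a) ^ 2 + b ^ 2) ^ 2)⁻¹)
      = fun x => (b ^ 4)⁻¹ * g ((x - a) / b) := by
    ext x
    simp only [g]
    field_simp
    ring
  have hint : Integrable fun x => (b ^ 4)⁻¹ * g ((x - a) / b) :=
    ((integrable_inv_one_add_sq_sq.comp_div hb.ne').comp_sub_right a).const_mul _
  rw [← ofReal_integral_eq_lintegral_ofReal (hrescale ▸ hint)
      (.of_forall fun x => by positivity),
    hrescale, integral_const_mul, integral_sub_right_eq_self (fun x => g (x / b)),
    Measure.integral_comp_div, integral_inv_one_add_sq_sq, smul_eq_mul, abs_of_pos hb]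
  congr 1
  field_simp

theorem setLIntegral_Ioi_div_add_pow_three {t : ℝ} (ht : 0 < t) :
    ∫⁻ y in Ioi (0 : ℝ), ENNReal.ofReal (y / (y + t) ^ 3) = ENNReal.ofReal (1 / (2 * t)) := by
  have hderiv : ∀ y ∈ Ici (0 : ℝ),
      HasDerivAt (fun y => t / 2 * ((y + t) ^ 2)⁻¹ - (y + t)⁻¹) (y / (y + t) ^ 3) y := by
    intro y hy
    have h : y + t ≠ 0 := by have : (0 : ℝ) ≤ y := hy; positivity
    have h1 : HasDerivAt (fun y => y + t) 1 y := (hasDerivAt_id' y).add_const t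
    refine ((((h1.fun_pow 2).inv (pow_ne_zero 2 h)).const_mul (t / 2)).sub
      (h1.inv h)).congr_deriv ?_
    field_simp
    ring
  have hnonneg : ∀ y ∈ Ioi (0 : ℝ), 0 ≤ y / (y + t) ^ 3 :=
    fun y (hy : 0 < y) => by positivity
  have hlim : Tendsto (fun y => t / 2 * ((y + t) ^ 2)⁻¹ - (y + t)⁻¹) atTop (𝓝 0) := by
    have h := tendsto_atTop_add_const_right atTop t tendsto_id
    simpa using (((tendsto_pow_atTop two_ne_zero).comp h).inv_tendsto_atTop.const_mul
      (t / 2)).sub h.inv_tendsto_atTop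
  rw [← ofReal_integral_eq_lintegral_ofReal
      (integrableOn_Ioi_deriv_of_nonneg' hderiv hnonneg hlim)
      ((ae_restrict_iff' measurableSet_Ioi).2 (.of_forall hnonneg)),
    integral_Ioi_of_hasDerivAt_of_nonneg' hderiv hnonneg hlim]
  congr 1
  field_simp
  ring

theorem setLIntegral_im_pos_eq_lintegral_lintegral {f : ℂ → ℝ≥0∞} (hf : Measurable f) :
    ∫⁻ ζ in {w : ℂ | 0 < w.im}, f ζ = ∫⁻ y in Ioi (0 : ℝ), ∫⁻ x : ℝ, f ⟨x, y⟩ := by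
  have hpre :
      Complex.measurableEquivRealProd.symm ⁻¹' {w : ℂ | 0 < w.im} = univ ×ˢ Ioi 0 := by
    ext p
    simp [Complex.measurableEquivRealProd]
  rw [← Complex.volume_preserving_equiv_real_prod.symm.setLIntegral_comp_preimage_emb
    (MeasurableEquiv.measurableEmbedding _), hpre, Measure.volume_eq_prod,
    ← Measure.prod_restrict, Measure.restrict_univ]
  exact lintegral_prod_symm _ (hf.comp (MeasurableEquiv.measurable _)).aemeasurable

theorem setLIntegral_im_pos_im_div_norm_sub_pow_four {c : ℂ} (hc : c.im < 0) :
    ∫⁻ ζ in {w : ℂ | 0 < w.im}, ENNReal.ofReal (ζ.im / ‖ζ - c‖ ^ 4)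
      = ENNReal.ofReal (π / (4 * -c.im)) := by
  have hinner : ∀ y ∈ Ioi (0 : ℝ), ∫⁻ x : ℝ, ENNReal.ofReal (y / ‖(⟨x, y⟩ : ℂ) - c‖ ^ 4)
      = ENNReal.ofReal (π / 2) * ENNReal.ofReal (y / (y + -c.im) ^ 3) := by
    intro y (hy : 0 < y)
    have hnorm (x : ℝ) :
        ‖(⟨x, y⟩ : ℂ) - c‖ ^ 4 = ((x - c.re) ^ 2 + (y + -c.im) ^ 2) ^ 2 := by
      rw [show (4 : ℕ) = 2 * 2 from rfl, pow_mul, Complex.sq_norm, Complex.normSq_apply]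
      simp only [Complex.sub_re, Complex.sub_im]
      ring
    calc ∫⁻ x : ℝ, ENNReal.ofReal (y / ‖(⟨x, y⟩ : ℂ) - c‖ ^ 4)
        = ∫⁻ x : ℝ, ENNReal.ofReal y
            * ENNReal.ofReal ((((x - c.re) ^ 2 + (y + -c.im) ^ 2) ^ 2)⁻¹) := by
          simp_rw [hnorm, div_eq_mul_inv y, ENNReal.ofReal_mul hy.le]
      _ = ENNReal.ofReal (π / 2) * ENNReal.ofReal (y / (y + -c.im) ^ 3) := by
          rw [lintegral_const_mul' _ _ ENNReal.ofReal_ne_top,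
            lintegral_inv_sub_sq_add_sq_sq _ (by linarith), ← ENNReal.ofReal_mul hy.le,
            ← ENNReal.ofReal_mul (by positivity : (0 : ℝ) ≤ π / 2)]
          congr 1
          field_simp
  rw [setLIntegral_im_pos_eq_lintegral_lintegral (by fun_prop),
    setLIntegral_congr_fun measurableSet_Ioi hinner,
    lintegral_const_mul' _ _ ENNReal.ofReal_ne_top,
    setLIntegral_Ioi_div_add_pow_three (by linarith), ← ENNReal.ofReal_mul (by positivity)]
  congr 1
  field_simp
  ring

noncomputable def halfPlaneKernel (z ζ : ℂ) : ℝ≥0∞ :=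
  ENNReal.ofReal (-z.im * ζ.im / ‖ζ - z‖ ^ 4)

theorem measurable_halfPlaneKernel : Measurable (uncurry halfPlaneKernel) := by
  unfold halfPlaneKernel
  fun_prop

theorem setLIntegral_halfPlaneKernel_right {z : ℂ} (hz : z.im < 0) :
    ∫⁻ ζ in {w : ℂ | 0 < w.im}, halfPlaneKernel z ζ = ENNReal.ofReal (π / 4) := by
  simp_rw [halfPlaneKernel, mul_div_assoc, ENNReal.ofReal_mul (neg_nonneg.2 hz.le)]
  rw [lintegral_const_mul' _ _ ENNReal.ofReal_ne_top,
    setLIntegral_im_pos_im_div_norm_sub_pow_four hz, ← ENNReal.ofReal_mul (by linarith)]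
  congr 1
  field_simp [hz.ne]

theorem setLIntegral_halfPlaneKernel_left {ζ : ℂ} (hζ : 0 < ζ.im) :
    ∫⁻ z in {w : ℂ | w.im < 0}, halfPlaneKernel z ζ = ENNReal.ofReal (π / 4) := by
  have hpre : Neg.neg ⁻¹' {w : ℂ | w.im < 0} = {w : ℂ | 0 < w.im} := by
    ext w
    simp
  have hswap (w : ℂ) : halfPlaneKernel (-w) ζ = halfPlaneKernel (-ζ) w := by
    simp only [halfPlaneKernel, Complex.neg_im, neg_neg, sub_neg_eq_add]
    rw [mul_comm, add_comm]
  rw [← (Measure.measurePreserving_neg volume).setLIntegral_comp_preimage_emb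
    (MeasurableEquiv.neg ℂ).measurableEmbedding, hpre]
  simp_rw [hswap]
  exact setLIntegral_halfPlaneKernel_right (by simpa using hζ)

theorem ofReal_norm_sq_mul_im_sq_le (μ : ℂ → ℂ) {z : ℂ} (hz : z.im < 0) :
    ENNReal.ofReal (‖∫ ζ in {w : ℂ | 0 < w.im}, μ ζ * (ζ - z) ^ (-4 : ℤ)‖ ^ 2 * z.im ^ 2)
      ≤ (∫⁻ ζ in {w : ℂ | 0 < w.im},
          halfPlaneKernel z ζ * ENNReal.ofReal (‖μ ζ‖ / ζ.im)) ^ 2 := by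
  have hweight : ∀ ζ ∈ {w : ℂ | 0 < w.im},
      ‖μ ζ * (ζ - z) ^ (-4 : ℤ)‖ₑ * ENNReal.ofReal (-z.im)
        = halfPlaneKernel z ζ * ENNReal.ofReal (‖μ ζ‖ / ζ.im) := by
    intro ζ (hζ : 0 < ζ.im)
    rw [← ofReal_norm, halfPlaneKernel, ← ENNReal.ofReal_mul (norm_nonneg _),
      ← ENNReal.ofReal_mul (div_nonneg (mul_nonneg (by linarith) hζ.le) (by positivity))]
    congr 1
    rw [norm_mul, norm_zpow]
    field_simp
  calc ENNReal.ofReal (‖∫ ζ in {w : ℂ | 0 < w.im}, μ ζ * (ζ - z) ^ (-4 : ℤ)‖ ^ 2 * z.im ^ 2)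
      = (‖∫ ζ in {w : ℂ | 0 < w.im}, μ ζ * (ζ - z) ^ (-4 : ℤ)‖ₑ
          * ENNReal.ofReal (-z.im)) ^ 2 := by
        rw [← ofReal_norm, ← ENNReal.ofReal_mul (norm_nonneg _),
          ← ENNReal.ofReal_pow (mul_nonneg (norm_nonneg _) (by linarith))]
        congr 1
        ring
    _ ≤ (∫⁻ ζ in {w : ℂ | 0 < w.im},
          ‖μ ζ * (ζ - z) ^ (-4 : ℤ)‖ₑ * ENNReal.ofReal (-z.im)) ^ 2 := by
        rw [lintegral_mul_const' _ _ ENNReal.ofReal_ne_top]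
        gcongr
        exact enorm_integral_le_lintegral_enorm _
    _ = _ := by
        rw [setLIntegral_congr_fun (measurableSet_lt measurable_const Complex.measurable_im)
          hweight]

theorem bers_embedding_L2_bound_general (μ : ℂ → ℂ) (hmeas : Measurable μ) :
    ∫⁻ z in {w : ℂ | w.im < 0},
        ENNReal.ofReal
          (‖∫ ζ in {w : ℂ | 0 < w.im}, μ ζ * (ζ - z) ^ (-4 : ℤ)‖ ^ 2 * z.im ^ 2)
      ≤ ENNReal.ofReal (Real.pi ^ 2 / 16) *
          ∫⁻ ζ in {w : ℂ | 0 < w.im}, ENNReal.ofReal (‖μ ζ‖ ^ 2 / ζ.im ^ 2) := by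
  have hupper : MeasurableSet {w : ℂ | 0 < w.im} :=
    measurableSet_lt measurable_const Complex.measurable_im
  have hlower : MeasurableSet {w : ℂ | w.im < 0} :=
    measurableSet_lt Complex.measurable_im measurable_const
  calc _ ≤ ∫⁻ z in {w : ℂ | w.im < 0}, (∫⁻ ζ in {w : ℂ | 0 < w.im},
          halfPlaneKernel z ζ * ENNReal.ofReal (‖μ ζ‖ / ζ.im)) ^ 2 :=
        setLIntegral_mono' hlower fun z hz => ofReal_norm_sq_mul_im_sq_le μ hz
    _ ≤ ENNReal.ofReal (π / 4) * ENNReal.ofReal (π / 4)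
          * ∫⁻ ζ in {w : ℂ | 0 < w.im}, ENNReal.ofReal (‖μ ζ‖ / ζ.im) ^ 2 :=
        lintegral_sq_lintegral_mul_le_of_schur measurable_halfPlaneKernel (by fun_prop)
          ((ae_restrict_iff' hlower).2 (.of_forall fun z hz =>
            (setLIntegral_halfPlaneKernel_right hz).le))
          ((ae_restrict_iff' hupper).2 (.of_forall fun ζ hζ =>
            (setLIntegral_halfPlaneKernel_left hζ).le))
    _ = _ := by
        rw [← ENNReal.ofReal_mul (by positivity), setLIntegral_congr_fun hupper
          fun ζ (hζ : 0 < ζ.im) => by rw [← ENNReal.ofReal_pow (by positivity), div_pow]]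
        ring_nf

/-- **L² boundedness of the infinitesimal Bers embedding.**
Let `μ` be measurable on the upper half-plane `ℍ` with `∫_ℍ |μ(ζ)|² (Im ζ)^{−2} dA(ζ) < ∞`,
and let `F(z) = ∫_ℍ μ(ζ)(ζ − z)^{−4} dA(ζ)` on the lower half-plane `ℍ*`. Then
`∫_{ℍ*} |F(z)|² (Im z)² dA(z) ≤ (π²/16) ∫_ℍ |μ(ζ)|² (Im ζ)^{−2} dA(ζ)`. -/
theorem bers_embedding_L2_bound (μ : ℂ → ℂ) (hmeas : Measurable μ)
    (hint : ∫⁻ ζ in {w : ℂ | 0 < w.im},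
        ENNReal.ofReal (‖μ ζ‖ ^ 2 / ζ.im ^ 2) < ⊤) :
    ∫⁻ z in {w : ℂ | w.im < 0},
        ENNReal.ofReal
          (‖∫ ζ in {w : ℂ | 0 < w.im}, μ ζ * (ζ - z) ^ (-4 : ℤ)‖ ^ 2 * z.im ^ 2)
      ≤ ENNReal.ofReal (Real.pi ^ 2 / 16) *
          ∫⁻ ζ in {w : ℂ | 0 < w.im}, ENNReal.ofReal (‖μ ζ‖ ^ 2 / ζ.im ^ 2) :=
  bers_embedding_L2_bound_general μ hmeas
end

section
/- Let a, b be distinct real numbers and define f(z) = ((z − a)·(z − b)/(a − b)) · Log((z − b)/(z − a)) for z in the open lower half-plane ℍ* = {z ∈ ℂ : Im z < 0}, where Log is the principal branch of the complex logarithm. Then f is holomorphic on ℍ* and its third derivative satisfies f'''(z) = (a − b)² / ((z − a)²·(z − b)²) for all z ∈ ℍ*. -/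
/-!
With `q = (z - a)(z - b)` and `L = Log((z - b)/(z - a))`, the ratio never lies on `(-∞, 0]` off the
real axis, so `L' = (b - a)/q`. Differentiating `f = qL/(a - b)` then gives
`f' = q'L/(a - b) - 1`, `f'' = 2L/(a - b) - q'/q` and `f''' = (q'² - 4q)/q²`, and
`q'² - 4q = (a - b)²` is the discriminant of `q`.
-/

open Complex Set

section IteratedDeriv

variable {𝕜 F : Type*} [NontriviallyNormedField 𝕜] [NormedAddCommGroup F] [NormedSpace 𝕜 F]

theorem iteratedDeriv_three_eqOn {f f₁ f₂ f₃ : 𝕜 → F} {U : Set 𝕜} (hU : IsOpen U)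
    (h₀ : ∀ x ∈ U, HasDerivAt f (f₁ x) x) (h₁ : ∀ x ∈ U, HasDerivAt f₁ (f₂ x) x)
    (h₂ : ∀ x ∈ U, HasDerivAt f₂ (f₃ x) x) : EqOn (iteratedDeriv 3 f) f₃ U := by
  have d₁ : EqOn (deriv f) f₁ U := fun x hx => (h₀ x hx).deriv
  have d₂ : EqOn (deriv (deriv f)) f₂ U := fun x hx => ((d₁.deriv hU) hx).trans (h₁ x hx).deriv
  intro x hx
  simp only [iteratedDeriv_succ, iteratedDeriv_zero]
  rw [(d₂.deriv hU) hx, (h₂ x hx).deriv]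

end IteratedDeriv

namespace ShearExtension

variable {a b : ℝ} {z : ℂ}

theorem sub_ofReal_ne_zero (hz : z.im ≠ 0) (c : ℝ) : z - c ≠ 0 := by
  intro h
  rw [sub_eq_zero.mp h, ofReal_im] at hz
  exact hz rfl

/-- A nonpositive ratio `(z - b)/(z - a) = -t` would give `(1 + t) Im z = 0`. -/
theorem div_sub_ofReal_mem_slitPlane (hz : z.im ≠ 0) (a b : ℝ) :
    (z - b) / (z - a) ∈ slitPlane := by
  rw [mem_slitPlane_iff_not_le_zero, le_def]
  rintro ⟨hre, him⟩
  set w := (z - b) / (z - a)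
  have hw : z - b = w * (z - a) := by rw [div_mul_cancel₀ _ (sub_ofReal_ne_zero hz a)]
  have := congrArg im hw
  simp only [sub_im, ofReal_im, sub_zero, mul_im, him, zero_im, zero_mul, add_zero] at this
  have : (1 - w.re) * z.im = 0 := by linear_combination this
  rcases mul_eq_zero.mp this with h | h
  · rw [zero_re] at hre; linarith
  · exact hz h

theorem hasDerivAt_log_div (hz : z.im ≠ 0) :
    HasDerivAt (fun z : ℂ => log ((z - b) / (z - a))) ((b - a) / ((z - a) * (z - b))) z := by
  have ha := sub_ofReal_ne_zero hz a
  have hb := sub_ofReal_ne_zero hz b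
  refine ((((hasDerivAt_id' z).sub_const (b : ℂ)).div ((hasDerivAt_id' z).sub_const (a : ℂ))
    ha).clog (div_sub_ofReal_mem_slitPlane hz a b)).congr_deriv ?_
  simp only [Pi.div_apply]
  field_simp
  ring

variable (hab : a ≠ b) (hz : z.im ≠ 0)
include hab hz

theorem hasDerivAt_shear :
    HasDerivAt (fun z : ℂ => (z - a) * (z - b) / (a - b) * log ((z - b) / (z - a)))
      ((2 * z - a - b) / (a - b) * log ((z - b) / (z - a)) - 1) z := by
  have hab' : (a : ℂ) - b ≠ 0 := sub_ne_zero.mpr (ofReal_injective.ne hab)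
  have ha := sub_ofReal_ne_zero hz a
  have hb := sub_ofReal_ne_zero hz b
  refine (((((hasDerivAt_id' z).sub_const (a : ℂ)).mul
    ((hasDerivAt_id' z).sub_const (b : ℂ))).div_const _).mul (hasDerivAt_log_div hz)).congr_deriv ?_
  simp only [Pi.mul_apply]
  field_simp
  ring

theorem hasDerivAt_shear_deriv :
    HasDerivAt (fun z : ℂ => (2 * z - a - b) / (a - b) * log ((z - b) / (z - a)) - 1)
      (2 / (a - b) * log ((z - b) / (z - a)) - (2 * z - a - b) / ((z - a) * (z - b))) z := by
  have hab' : (a : ℂ) - b ≠ 0 := sub_ne_zero.mpr (ofReal_injective.ne hab)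
  have ha := sub_ofReal_ne_zero hz a
  have hb := sub_ofReal_ne_zero hz b
  refine (((((((hasDerivAt_id' z).const_mul 2).sub_const (a : ℂ)).sub_const (b : ℂ)).div_const
    _).mul (hasDerivAt_log_div hz)).sub_const 1).congr_deriv ?_
  field_simp
  ring

theorem hasDerivAt_shear_deriv_deriv :
    HasDerivAt (fun z : ℂ =>
        2 / (a - b) * log ((z - b) / (z - a)) - (2 * z - a - b) / ((z - a) * (z - b)))
      ((a - b) ^ 2 / ((z - a) ^ 2 * (z - b) ^ 2)) z := by
  have hab' : (a : ℂ) - b ≠ 0 := sub_ne_zero.mpr (ofReal_injective.ne hab)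
  have ha := sub_ofReal_ne_zero hz a
  have hb := sub_ofReal_ne_zero hz b
  refine (((hasDerivAt_log_div hz).const_mul _).sub
    (((((hasDerivAt_id' z).const_mul 2).sub_const (a : ℂ)).sub_const (b : ℂ)).div
      (((hasDerivAt_id' z).sub_const (a : ℂ)).mul ((hasDerivAt_id' z).sub_const (b : ℂ)))
      (mul_ne_zero ha hb))).congr_deriv ?_
  simp only [Pi.mul_apply]
  field_simp
  ring

end ShearExtension

open ShearExtension in
/-- **The holomorphic extension of a unit infinitesimal shear and its third derivative.**
For distinct reals `a ≠ b`, the function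
`f(z) = ((z − a)(z − b)/(a − b)) · Log((z − b)/(z − a))` (principal branch) is holomorphic on
the lower half-plane and `f'''(z) = (a − b)²/((z − a)²(z − b)²)` there. -/
theorem shear_extension_third_derivative (a b : ℝ) (hab : a ≠ b) (f : ℂ → ℂ)
    (hf : f = fun z : ℂ =>
      ((z - (a : ℂ)) * (z - (b : ℂ)) / ((a : ℂ) - (b : ℂ))) *
        Complex.log ((z - (b : ℂ)) / (z - (a : ℂ)))) :
    DifferentiableOn ℂ f {z : ℂ | z.im < 0} ∧
    ∀ z ∈ {z : ℂ | z.im < 0},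
      iteratedDeriv 3 f z = ((a : ℂ) - (b : ℂ)) ^ 2 / ((z - (a : ℂ)) ^ 2 * (z - (b : ℂ)) ^ 2) := by
  subst hf
  have hU : IsOpen {z : ℂ | z.im < 0} := isOpen_lt continuous_im continuous_const
  exact ⟨fun z hz => (hasDerivAt_shear hab (ne_of_lt hz)).differentiableAt.differentiableWithinAt,
    iteratedDeriv_three_eqOn hU (fun z hz => hasDerivAt_shear hab (ne_of_lt hz))
      (fun z hz => hasDerivAt_shear_deriv hab (ne_of_lt hz))
      (fun z hz => hasDerivAt_shear_deriv_deriv hab (ne_of_lt hz))⟩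
end

section
/- Let φ : ℝ → ℝ be strictly increasing with φ(x) → ∞ as x → ∞ and φ(x) → −∞ as x → −∞, and suppose the function ψ(x) := −1/φ(−1/x) (for x ≠ 0 with −1/x in the domain where φ is nonzero, extended by ψ(0) = 0) is continuously differentiable on an interval [−δ, 0] for some δ > 0 with ψ'(0) > 0. Then lim_{n→∞} (φ(n+1) − φ(n)) = 1/ψ'(0), where the limit is over natural numbers n. -/
/-!
Put `x n = -1/n`, so that `ψ (x n) = -1/φ n`. Then the chord slope of `ψ` from `0` to `x n` is
`n / φ n`, and `φ (n+1) - φ n` is the chord slope of `ψ` over `[x n, x (n+1)]` divided by the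
product of the chord slopes from `0` to `x n` and to `x (n+1)`. Since `ψ'` is continuous at `0`
within `[-δ, 0]`, the mean value inequality makes every chord slope between points tending to `0`
tend to `ψ' 0`, so the quotient tends to `ψ' 0 / (ψ' 0 * ψ' 0) = 1 / ψ' 0`.
-/

open Filter Set Topology Metric

theorem tendsto_slope_of_continuousWithinAt_deriv {𝕜 E : Type*} [RCLike 𝕜] [NormedAddCommGroup E]
    [NormedSpace 𝕜 E] {f f' : 𝕜 → E} {s : Set 𝕜} {p : 𝕜} (hs : Convex ℝ s)
    (hf : ∀ x ∈ s, HasDerivWithinAt f (f' x) s x) (hf' : ContinuousWithinAt f' s p)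
    {ι : Type*} {l : Filter ι} {u v : ι → 𝕜} (hu : Tendsto u l (𝓝[s] p))
    (hv : Tendsto v l (𝓝[s] p)) (huv : ∀ᶠ i in l, u i ≠ v i) :
    Tendsto (fun i => slope f (u i) (v i)) l (𝓝 (f' p)) := by
  rw [Metric.tendsto_nhds]
  intro ε hε
  obtain ⟨η, hη, hclose⟩ := Metric.continuousWithinAt_iff.1 hf' (ε / 2) (half_pos hε)
  set t := s ∩ ball p η
  have hg : ∀ x ∈ t, HasDerivWithinAt (fun y => f y - y • f' p) (f' x - f' p) t x := fun x hx =>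
    ((hf x hx.1).mono inter_subset_left).sub
      (((hasDerivWithinAt_id (𝕜 := 𝕜) x t).smul_const (f' p)).congr_deriv (one_smul 𝕜 _))
  have hbound : ∀ x ∈ t, ‖f' x - f' p‖ ≤ ε / 2 := fun x hx => by
    rw [← dist_eq_norm]; exact (hclose hx.1 hx.2).le
  have hmem : t ∈ 𝓝[s] p := inter_mem_nhdsWithin s (ball_mem_nhds p hη)
  filter_upwards [hu hmem, hv hmem, huv] with i hui hvi hne
  have hsub : v i - u i ≠ 0 := sub_ne_zero.2 hne.symm
  have hmvt :=
    (hs.inter (convex_ball p η)).norm_image_sub_le_of_norm_hasDerivWithin_le hg hbound hui hvi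
  calc dist (slope f (u i) (v i)) (f' p)
      = ‖v i - u i‖⁻¹ * ‖f (v i) - v i • f' p - (f (u i) - u i • f' p)‖ := by
        rw [dist_eq_norm, ← norm_inv, ← norm_smul]
        congr 1
        rw [slope_def_module, sub_sub_sub_comm, ← sub_smul, smul_sub _ (f (v i) - f (u i)),
          smul_smul, inv_mul_cancel₀ hsub, one_smul]
    _ ≤ ε / 2 := by
        rw [inv_mul_le_iff₀ (norm_pos_iff.2 hsub)]; linarith
    _ < ε := half_lt_self hε

/-- Here `slope ψ 0 (-1 / s) = s / φ s`, so `has` and `hat` amount to `φ s ≠ 0` and `φ t ≠ 0`. -/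
theorem slope_eq_of_conj_neg_inv {φ ψ : ℝ → ℝ} (hψ0 : ψ 0 = 0)
    (hψ : ∀ x : ℝ, x ≠ 0 → ψ x = -1 / φ (-1 / x)) {s t : ℝ} (hs : s ≠ 0) (ht : t ≠ 0)
    (has : slope ψ 0 (-1 / s) ≠ 0) (hat : slope ψ 0 (-1 / t) ≠ 0) :
    slope φ s t = slope ψ (-1 / s) (-1 / t) / (slope ψ 0 (-1 / s) * slope ψ 0 (-1 / t)) := by
  have hψs : ψ (-1 / s) = -1 / φ s := by rw [hψ _ (by simpa using hs)]; field_simp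
  have hψt : ψ (-1 / t) = -1 / φ t := by rw [hψ _ (by simpa using ht)]; field_simp
  have hφs : φ s ≠ 0 := by rintro h; simp [slope_def_field, hψ0, hψs, h] at has
  have hφt : φ t ≠ 0 := by rintro h; simp [slope_def_field, hψ0, hψt, h] at hat
  rw [eq_div_iff (mul_ne_zero has hat)]
  by_cases hst : s = t
  · simp [hst]
  simp only [slope_def_field, hψ0, sub_zero]
  rw [hψs, hψt]
  simp only [neg_div, neg_sub_neg]
  field_simp

theorem tendsto_neg_one_div_natCast_nhdsWithin_Icc {δ : ℝ} (hδ : 0 < δ) :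
    Tendsto (fun n : ℕ => -1 / (n : ℝ)) atTop (𝓝[Icc (-δ) 0] 0) := by
  have hx := tendsto_const_div_atTop_nhds_zero_nat (-1 : ℝ)
  refine tendsto_nhdsWithin_iff.2 ⟨hx, ?_⟩
  filter_upwards [hx.eventually_const_le (neg_lt_zero.2 hδ)] with n hn
  exact ⟨hn, div_nonpos_of_nonpos_of_nonneg (by norm_num) n.cast_nonneg⟩

theorem increments_from_C1_boundary_general (φ ψ ψ' : ℝ → ℝ)
    (hψ0 : ψ 0 = 0) (hψ : ∀ x : ℝ, x ≠ 0 → ψ x = -1 / φ (-1 / x))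
    (δ : ℝ) (hδ : 0 < δ)
    (hderiv : ∀ x ∈ Set.Icc (-δ) 0, HasDerivWithinAt ψ (ψ' x) (Set.Icc (-δ) 0) x)
    (hcont : ContinuousOn ψ' (Set.Icc (-δ) 0)) (hpos : 0 < ψ' 0) :
    Tendsto (fun n : ℕ => φ ((n : ℝ) + 1) - φ n) atTop (nhds (1 / ψ' 0)) := by
  have h0 : (0 : ℝ) ∈ Icc (-δ) 0 := ⟨neg_nonpos.2 hδ.le, le_rfl⟩
  have hzero : Tendsto (fun _ : ℕ => (0 : ℝ)) atTop (𝓝[Icc (-δ) 0] 0) :=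
    tendsto_const_nhdsWithin h0
  have hx := tendsto_neg_one_div_natCast_nhdsWithin_Icc hδ
  have hx₁ : Tendsto (fun n : ℕ => -1 / ((n : ℝ) + 1)) atTop (𝓝[Icc (-δ) 0] 0) := by
    simpa [Function.comp_def] using hx.comp (tendsto_add_atTop_nat 1)
  have hslope {u v : ℕ → ℝ} := tendsto_slope_of_continuousWithinAt_deriv (convex_Icc (-δ) 0)
    hderiv (hcont 0 h0) (u := u) (v := v) (l := atTop)
  have hA := hslope hzero hx <| (eventually_gt_atTop 0).mono fun n hn =>
    (div_ne_zero (neg_ne_zero.2 one_ne_zero) (Nat.cast_pos.2 hn).ne').symm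
  have hA₁ := hslope hzero hx₁ <| .of_forall fun n =>
    (div_ne_zero (neg_ne_zero.2 one_ne_zero) n.cast_add_one_ne_zero).symm
  have hB := hslope hx hx₁ <| (eventually_gt_atTop 0).mono fun n hn => by
    have : (0 : ℝ) < n := by exact_mod_cast hn
    rw [Ne, div_eq_div_iff this.ne' (by positivity)]; linarith
  rw [show 1 / ψ' 0 = ψ' 0 / (ψ' 0 * ψ' 0) by field_simp]
  refine (hB.div (hA.mul hA₁) (by positivity)).congr' ?_
  filter_upwards [eventually_gt_atTop 0, hA.eventually_ne hpos.ne', hA₁.eventually_ne hpos.ne']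
    with n hn hAn hAn₁
  rw [Pi.div_apply, ← slope_eq_of_conj_neg_inv hψ0 hψ (by positivity) (by positivity) hAn hAn₁,
    slope_def_field, add_sub_cancel_left, div_one]

/-- **Convergent increments from boundary differentiability (converse direction).**
Let `φ : ℝ → ℝ` be strictly increasing with `φ(x) → ±∞` as `x → ±∞`, and suppose the
function `ψ`, given by `ψ(x) = −1/φ(−1/x)` for `x ≠ 0` and `ψ(0) = 0`, is continuously
differentiable on `[−δ, 0]` for some `δ > 0` with `ψ'(0) > 0`. Then
`φ(n+1) − φ(n) → 1/ψ'(0)` as `n → ∞`. -/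
theorem increments_from_C1_boundary (φ ψ ψ' : ℝ → ℝ) (hmono : StrictMono φ)
    (htop : Tendsto φ atTop atTop) (hbot : Tendsto φ atBot atBot)
    (hψ0 : ψ 0 = 0) (hψ : ∀ x : ℝ, x ≠ 0 → ψ x = -1 / φ (-1 / x))
    (δ : ℝ) (hδ : 0 < δ)
    (hderiv : ∀ x ∈ Set.Icc (-δ) 0, HasDerivWithinAt ψ (ψ' x) (Set.Icc (-δ) 0) x)
    (hcont : ContinuousOn ψ' (Set.Icc (-δ) 0)) (hpos : 0 < ψ' 0) :
    Tendsto (fun n : ℕ => φ ((n : ℝ) + 1) - φ n) atTop (nhds (1 / ψ' 0)) :=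
  increments_from_C1_boundary_general φ ψ ψ' hψ0 hψ δ hδ hderiv hcont hpos
end

section
/- Define φ(x) = x·log x − x for x ≥ 2, and for integers n ≥ 3 set s_n = log((φ(n+1) − φ(n))/(φ(n) − φ(n−1))). Then: (i) there exists a constant C > 0 such that |s_n − 1/(n·log n)| ≤ C/n² for all n ≥ 3; (ii) the series ∑_{n≥3} s_n² converges; (iii) the series ∑_{n≥3} s_n diverges to +∞. -/
open Filter

/-- The boundary homeomorphism `φ(x) = x log x − x` of the explicit Weil–Petersson example. -/
noncomputable def phiWP (x : ℝ) : ℝ := x * Real.log x - x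

/-- The shear `s_n = log((φ(n+1) − φ(n))/(φ(n) − φ(n−1)))` along the fan of edges `(n, ∞)`. -/
noncomputable def shearWP (n : ℕ) : ℝ :=
  Real.log ((phiWP ((n : ℝ) + 1) - phiWP n) / (phiWP n - phiWP ((n : ℝ) - 1)))

open Real

/-!
Write `a(t) = φ(t) - φ(t - 1)`, so that `s_n = log (a(n + 1) / a(n))`. Since `φ' = log`,
`a(t)` lies between `log t - 1/t` and `log t`, while the second difference `a(t + 1) - a(t)`
is `1/t + O(1/t²)`. Hence `a(n + 1) / a(n) = 1 + 1/(n log n) + O(1/n²)`, and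
`log (1 + x) = x + O(x²)` gives (i); (ii) follows since `s_n = O(1/n)`. For (iii) the partial
sums telescope to `log a(N + 3) - log a(3)`, which diverges because `a(t) ≥ log t - 1`.
-/

theorem abs_log_one_add_sub_quadratic_le {u : ℝ} (hu : |u| < 1) :
    |log (1 + u) - (u - u ^ 2 / 2)| ≤ |u| ^ 3 / (1 - |u|) := by
  have h := abs_log_sub_add_sum_range_le (x := -u) (by rwa [abs_neg]) 2
  rw [abs_neg] at h
  convert h using 2
  simp only [Finset.sum_range_succ, Finset.sum_range_zero, sub_neg_eq_add]
  ring_nf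

theorem abs_log_one_add_sub_self_le {x : ℝ} (hx : -1 < x) :
    |log (1 + x) - x| ≤ x ^ 2 / (1 + x) := by
  have hx1 : 0 < 1 + x := by linarith
  have hup : log (1 + x) ≤ x := by linarith [log_le_sub_one_of_pos hx1]
  have hlow : 1 - (1 + x)⁻¹ ≤ log (1 + x) := one_sub_inv_le_log_of_pos hx1
  have h : x - x ^ 2 / (1 + x) = 1 - (1 + x)⁻¹ := by field_simp; ring
  rw [abs_le]
  constructor
  · linarith
  · linarith [div_nonneg (sq_nonneg x) hx1.le]

noncomputable def phiWPIncr (t : ℝ) : ℝ := phiWP t - phiWP (t - 1)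

theorem phiWPIncr_eq_log_add {t : ℝ} (ht : 1 < t) :
    phiWPIncr t = log t + (t - 1) * log (t / (t - 1)) - 1 := by
  rw [phiWPIncr, phiWP, phiWP, log_div (by linarith) (by linarith)]
  ring

theorem phiWPIncr_le_log {t : ℝ} (ht : 1 < t) : phiWPIncr t ≤ log t := by
  have h := log_le_sub_one_of_pos (x := t / (t - 1)) (by apply div_pos <;> linarith)
  have h1 : (t - 1) * (t / (t - 1) - 1) = 1 := by
    field_simp [(by linarith : t - 1 ≠ 0)]; ring
  rw [phiWPIncr_eq_log_add ht]
  nlinarith [mul_le_mul_of_nonneg_left h (by linarith : (0:ℝ) ≤ t - 1)]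

theorem log_sub_inv_le_phiWPIncr {t : ℝ} (ht : 1 < t) : log t - t⁻¹ ≤ phiWPIncr t := by
  have h := one_sub_inv_le_log_of_pos (x := t / (t - 1)) (by apply div_pos <;> linarith)
  have h1 : (t - 1) * (1 - (t / (t - 1))⁻¹) = 1 - t⁻¹ := by field_simp; ring
  rw [phiWPIncr_eq_log_add ht]
  nlinarith [mul_le_mul_of_nonneg_left h (by linarith : (0:ℝ) ≤ t - 1)]

theorem abs_phiWPIncr_add_one_sub_sub_le {t : ℝ} (ht : 1 < t) :
    |phiWPIncr (t + 1) - phiWPIncr t - t⁻¹| ≤ 2 / (t * (t - 1)) := by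
  have ht0 : 0 < t := by linarith
  have hu : |t⁻¹| < 1 := by rw [abs_inv, abs_of_pos ht0]; exact inv_lt_one_of_one_lt₀ ht
  have hu' : |-t⁻¹| < 1 := by rwa [abs_neg]
  have hp : log (1 + t⁻¹) = log (t + 1) - log t := by
    rw [← log_div (by linarith) ht0.ne']; congr 1; field_simp
  have hm : log (1 + -t⁻¹) = log (t - 1) - log t := by
    rw [← log_div (by linarith) ht0.ne']; congr 1; field_simp; ring
  -- the quadratic Taylor polynomials of the two logarithms contribute exactly `t⁻¹`
  have key : phiWPIncr (t + 1) - phiWPIncr t - t⁻¹ =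
      (t + 1) * (log (1 + t⁻¹) - (t⁻¹ - t⁻¹ ^ 2 / 2)) +
      (t - 1) * (log (1 + -t⁻¹) - (-t⁻¹ - (-t⁻¹) ^ 2 / 2)) := by
    rw [hp, hm]
    simp only [phiWPIncr, phiWP, add_sub_cancel_right]
    field_simp
    ring
  have hR := abs_log_one_add_sub_quadratic_le hu
  have hR' := abs_log_one_add_sub_quadratic_le hu'
  rw [abs_neg] at hR'
  rw [abs_inv, abs_of_pos ht0] at hR hR'
  calc |phiWPIncr (t + 1) - phiWPIncr t - t⁻¹|
      ≤ (t + 1) * (t⁻¹ ^ 3 / (1 - t⁻¹)) + (t - 1) * (t⁻¹ ^ 3 / (1 - t⁻¹)) := by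
        rw [key]
        refine (abs_add_le _ _).trans (add_le_add ?_ ?_) <;>
          rw [abs_mul, abs_of_pos (by linarith)] <;> gcongr
    _ = 2 / (t * (t - 1)) := by
        have : t - 1 ≠ 0 := by linarith
        field_simp
        ring

theorem one_le_log_of_three_le {t : ℝ} (ht : 3 ≤ t) : 1 ≤ log t :=
  (le_log_iff_exp_le (by linarith)).2 (exp_one_lt_three.le.trans ht)

theorem two_thirds_le_phiWPIncr {t : ℝ} (ht : 3 ≤ t) : 2 / 3 ≤ phiWPIncr t := by
  have h := log_sub_inv_le_phiWPIncr (by linarith : 1 < t)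
  have hinv : t⁻¹ ≤ 3⁻¹ := inv_anti₀ (by norm_num) ht
  linarith [one_le_log_of_three_le ht]

theorem phiWPIncr_pos {t : ℝ} (ht : 3 ≤ t) : 0 < phiWPIncr t :=
  lt_of_lt_of_le (by norm_num) (two_thirds_le_phiWPIncr ht)

theorem abs_phiWPIncr_add_one_sub_sub_le_of_three_le {t : ℝ} (ht : 3 ≤ t) :
    |phiWPIncr (t + 1) - phiWPIncr t - t⁻¹| ≤ 3 / t ^ 2 := by
  refine (abs_phiWPIncr_add_one_sub_sub_le (by linarith)).trans ?_
  rw [div_le_div_iff₀ (by nlinarith) (by positivity)]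
  nlinarith

theorem abs_phiWPIncr_ratio_sub_le {t : ℝ} (ht : 3 ≤ t) :
    |(phiWPIncr (t + 1) - phiWPIncr t) / phiWPIncr t - 1 / (t * log t)| ≤ 6 / t ^ 2 := by
  have ht0 : 0 < t := by linarith
  have hL := one_le_log_of_three_le ht
  have hB := two_thirds_le_phiWPIncr ht
  have hBL := phiWPIncr_le_log (by linarith : 1 < t)
  have hLB := log_sub_inv_le_phiWPIncr (by linarith : 1 < t)
  have hH := abs_phiWPIncr_add_one_sub_sub_le_of_three_le ht
  set B := phiWPIncr t
  set H := phiWPIncr (t + 1) - B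
  set L := log t
  have hsplit : H / B - 1 / (t * L) = (H - t⁻¹) / B + (L - B) / (t * B * L) := by
    field_simp
    ring
  have h1 : |(H - t⁻¹) / B| ≤ 9 / (2 * t ^ 2) := by
    rw [abs_div, abs_of_pos (show 0 < B by linarith)]
    calc |H - t⁻¹| / B ≤ (3 / t ^ 2) / (2 / 3) :=
          div_le_div₀ (by positivity) hH (by norm_num) hB
      _ = 9 / (2 * t ^ 2) := by ring
  have h2 : |(L - B) / (t * B * L)| ≤ 3 / (2 * t ^ 2) := by
    rw [abs_of_nonneg (div_nonneg (by linarith) (by positivity))]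
    calc (L - B) / (t * B * L) ≤ t⁻¹ / (t * (2 / 3) * 1) := by
          gcongr
          · linarith
      _ = 3 / (2 * t ^ 2) := by field_simp
  rw [hsplit]
  calc _ ≤ |(H - t⁻¹) / B| + |(L - B) / (t * B * L)| := abs_add_le _ _
    _ ≤ 9 / (2 * t ^ 2) + 3 / (2 * t ^ 2) := add_le_add h1 h2
    _ = 6 / t ^ 2 := by ring

theorem abs_log_phiWPIncr_div_sub_le {t : ℝ} (ht : 3 ≤ t) :
    |log (phiWPIncr (t + 1) / phiWPIncr t) - 1 / (t * log t)| ≤ 15 / t ^ 2 := by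
  have ht0 : 0 < t := by linarith
  have hL := one_le_log_of_three_le ht
  have hB := phiWPIncr_pos ht
  have hH := abs_le.1 (abs_phiWPIncr_add_one_sub_sub_le_of_three_le ht)
  have hx := abs_phiWPIncr_ratio_sub_le ht
  set x := (phiWPIncr (t + 1) - phiWPIncr t) / phiWPIncr t
  have hratio : phiWPIncr (t + 1) / phiWPIncr t = 1 + x := by
    rw [one_add_div hB.ne', add_sub_cancel]
  have hx0 : 0 ≤ x := by
    refine div_nonneg ?_ hB.le
    have : 3 / t ^ 2 ≤ t⁻¹ := by
      rw [div_le_iff₀ (by positivity)]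
      field_simp
      linarith
    linarith
  have hx3 : x ≤ 3 / t := by
    have h1 : 1 / (t * log t) ≤ 1 / t := one_div_le_one_div_of_le ht0 (by nlinarith)
    have h2 : 6 / t ^ 2 ≤ 2 / t := by
      rw [div_le_div_iff₀ (by positivity) ht0]
      nlinarith
    have h3 : 1 / t + 2 / t = 3 / t := by ring
    linarith [(abs_le.1 hx).2]
  have hlog : |log (1 + x) - x| ≤ 9 / t ^ 2 := by
    calc |log (1 + x) - x| ≤ x ^ 2 / (1 + x) := abs_log_one_add_sub_self_le (by linarith)
      _ ≤ x ^ 2 := div_le_self (sq_nonneg x) (by linarith)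
      _ ≤ (3 / t) ^ 2 := pow_le_pow_left₀ hx0 hx3 2
      _ = 9 / t ^ 2 := by ring
  rw [hratio]
  calc _ ≤ |log (1 + x) - x| + |x - 1 / (t * log t)| := abs_sub_le _ _ _
    _ ≤ 9 / t ^ 2 + 6 / t ^ 2 := add_le_add hlog hx
    _ = 15 / t ^ 2 := by ring

theorem shearWP_eq_log_div (n : ℕ) : shearWP n = log (phiWPIncr (n + 1) / phiWPIncr n) := by
  rw [shearWP, phiWPIncr, phiWPIncr, add_sub_cancel_right]

theorem abs_shearWP_sub_le {n : ℕ} (hn : 3 ≤ n) :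
    |shearWP n - 1 / (n * log n)| ≤ 15 / (n : ℝ) ^ 2 := by
  rw [shearWP_eq_log_div]
  exact abs_log_phiWPIncr_div_sub_le (by exact_mod_cast hn)

theorem abs_shearWP_le {n : ℕ} (hn : 3 ≤ n) : |shearWP n| ≤ 6 / n := by
  have ht : (3 : ℝ) ≤ n := by exact_mod_cast hn
  have h1 : |1 / (n * log n)| ≤ 1 / (n : ℝ) := by
    rw [abs_of_nonneg (by positivity)]
    exact one_div_le_one_div_of_le (by positivity) (by nlinarith [one_le_log_of_three_le ht])
  have h2 : 15 / (n : ℝ) ^ 2 ≤ 5 / n := by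
    rw [div_le_div_iff₀ (by positivity) (by positivity)]
    nlinarith
  calc |shearWP n| = |(shearWP n - 1 / (n * log n)) + 1 / (n * log n)| := by
        rw [sub_add_cancel]
    _ ≤ 15 / (n : ℝ) ^ 2 + 1 / n :=
        (abs_add_le _ _).trans (add_le_add (abs_shearWP_sub_le hn) h1)
    _ ≤ 6 / n := by linarith [show 5 / (n : ℝ) + 1 / n = 6 / n by ring]

theorem summable_shearWP_sq : Summable fun n : ℕ => shearWP (n + 3) ^ 2 := by
  have hsum : Summable fun n : ℕ => 36 * (((n + 3 : ℕ) : ℝ) ^ 2)⁻¹ :=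
    ((summable_nat_add_iff 3).2 (summable_nat_pow_inv.2 one_lt_two)).mul_left 36
  refine hsum.of_nonneg_of_le (fun n => sq_nonneg _) fun n => ?_
  calc shearWP (n + 3) ^ 2 = |shearWP (n + 3)| ^ 2 := (sq_abs _).symm
    _ ≤ (6 / ((n + 3 : ℕ) : ℝ)) ^ 2 := by gcongr; exact abs_shearWP_le (by omega)
    _ = 36 * (((n + 3 : ℕ) : ℝ) ^ 2)⁻¹ := by ring

theorem sum_range_shearWP (N : ℕ) :
    ∑ n ∈ Finset.range N, shearWP (n + 3) = log (phiWPIncr (N + 3)) - log (phiWPIncr 3) := by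
  have hne : ∀ n : ℕ, phiWPIncr (n + 3) ≠ 0 := fun n =>
    (phiWPIncr_pos (by linarith [n.cast_nonneg (α := ℝ)])).ne'
  have h : ∀ n : ℕ, shearWP (n + 3) =
      log (phiWPIncr ((n + 1 : ℕ) + 3)) - log (phiWPIncr (n + 3)) := by
    intro n
    rw [shearWP_eq_log_div, ← log_div (hne (n + 1)) (hne n)]
    push_cast
    ring_nf
  simp only [h, Finset.sum_range_sub (fun n : ℕ => log (phiWPIncr (n + 3))), Nat.cast_zero,
    zero_add]

theorem tendsto_phiWPIncr_atTop : Tendsto phiWPIncr atTop atTop := by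
  refine tendsto_atTop_mono' atTop ?_
    (tendsto_atTop_add_const_right atTop (-1) tendsto_log_atTop)
  filter_upwards [eventually_gt_atTop 1] with t ht
  linarith [log_sub_inv_le_phiWPIncr ht, inv_lt_one_of_one_lt₀ ht]

theorem tendsto_sum_range_shearWP :
    Tendsto (fun N : ℕ => ∑ n ∈ Finset.range N, shearWP (n + 3)) atTop atTop := by
  simp only [sum_range_shearWP, sub_eq_add_neg]
  exact tendsto_atTop_add_const_right _ _ <| tendsto_log_atTop.comp <|
    tendsto_phiWPIncr_atTop.comp <| tendsto_atTop_add_const_right _ 3 tendsto_natCast_atTop_atTop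

/-- **A Weil–Petersson homeomorphism with square-summable but non-summable shears.**
For `φ(x) = x log x − x` and `s_n = log((φ(n+1) − φ(n))/(φ(n) − φ(n−1)))` (for `n ≥ 3`):
(i) `|s_n − 1/(n log n)| ≤ C/n²` for some constant `C > 0`;
(ii) `∑_{n≥3} s_n²` converges;
(iii) `∑_{n≥3} s_n` diverges to `+∞`. -/
theorem wp_not_in_P_example :
    (∃ C > 0, ∀ n : ℕ, 3 ≤ n →
      |shearWP n - 1 / ((n : ℝ) * Real.log n)| ≤ C / (n : ℝ) ^ 2) ∧
    Summable (fun n : ℕ => (shearWP (n + 3)) ^ 2) ∧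
    Tendsto (fun N : ℕ => ∑ n ∈ Finset.range N, shearWP (n + 3)) atTop atTop :=
  ⟨⟨15, by norm_num, fun _ => abs_shearWP_sub_le⟩, summable_shearWP_sq,
    tendsto_sum_range_shearWP⟩
end
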